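/- Let A = (UT_{1,1}(E), *) with * sending rows (a,c),(0,b) to rows (b,c),(0,a). Then: (1) every symmetric element of degree 0 is central in A; (2) the product of any two symmetric elements of degree 1 is zero; (3) any two skew elements of degree 0 commute; (4) for any skew element v of degree 0 and symmetric element u of degree 1, vu + uv = 0. -/
import Mathlib


noncomputable section

/-- The infinite-dimensional Grassmann (exterior) algebra over `K` on a countably
infinite-dimensional vector space. -/
abbrev GrassmannE (K : Type) [Field K] := ExteriorAlgebra K (ℕ →₀ K)

/-- The even part `E₀` of the Grassmann algebra. -/
def E0 (K : Type) [Field K] : Submodule K (GrassmannE K) :=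
  CliffordAlgebra.evenOdd (0 : QuadraticForm K (ℕ →₀ K)) 0

/-- The odd part `E₁` of the Grassmann algebra. -/
def E1 (K : Type) [Field K] : Submodule K (GrassmannE K) :=
  CliffordAlgebra.evenOdd (0 : QuadraticForm K (ℕ →₀ K)) 1

open Matrix

/-- `UT_{1,1}(E)`: upper triangular 2×2 matrices `!![a,c;0,b]` with `a,b ∈ E₀`, `c ∈ E₁`. -/
def UT11E (K : Type) [Field K] : Set (Matrix (Fin 2) (Fin 2) (GrassmannE K)) :=
  {x | x 1 0 = 0 ∧ x 0 0 ∈ E0 K ∧ x 1 1 ∈ E0 K ∧ x 0 1 ∈ E1 K}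

/-- The graded involution `*` on `UT_{1,1}(E)` sending `!![a,c;0,b]` to `!![b,c;0,a]`. -/
def ustar (K : Type) [Field K] (x : Matrix (Fin 2) (Fin 2) (GrassmannE K)) :
    Matrix (Fin 2) (Fin 2) (GrassmannE K) :=
  !![x 1 1, x 0 1; 0, x 0 0]

/-- Degree-0 elements: diagonal matrices. -/
def IsDeg0 {K : Type} [Field K] (x : Matrix (Fin 2) (Fin 2) (GrassmannE K)) : Prop :=
  x 0 1 = 0 ∧ x 1 0 = 0

/-- Degree-1 elements: strictly upper triangular matrices. -/
def IsDeg1 {K : Type} [Field K] (x : Matrix (Fin 2) (Fin 2) (GrassmannE K)) : Prop :=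
  x 0 0 = 0 ∧ x 1 1 = 0 ∧ x 1 0 = 0

/-- Symmetric degree-0 part `{diag(a,a) : a ∈ E₀}`. -/

lemma even_central {K : Type} [Field K] {M : Type} [AddCommGroup M] [Module K M]
    (a : ExteriorAlgebra K M)
    (ha : a ∈ CliffordAlgebra.evenOdd (0 : QuadraticForm K M) 0)
    (b : ExteriorAlgebra K M) : a * b = b * a := by
  let ι' := CliffordAlgebra.ι (0 : QuadraticForm K M)
  have h12 : ∀ u v : M, ι' u * ι' v = -(ι' v * ι' u) := fun u v =>
    eq_neg_of_add_eq_zero_left (CliffordAlgebra.ι_mul_ι_add_swap_of_isOrtho (.all _ _))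
  have hι : ∀ m : M, a * ι' m = ι' m * a := by
    induction a, ha using CliffordAlgebra.even_induction with
    | algebraMap r => intro m; rw [Algebra.commutes]
    | add x y hx hy ihx ihy => intro m; simp only [add_mul, mul_add, ihx m, ihy m]
    | ι_mul_ι_mul m₁ m₂ x hx ih =>
      intro m
      calc ι' m₁ * ι' m₂ * x * ι' m
          = ι' m₁ * (ι' m₂ * ι' m) * x := by rw [mul_assoc _ x, ih m]; noncomm_ring
        _ = -(ι' m₁ * ι' m) * ι' m₂ * x := by rw [h12 m₂ m]; noncomm_ring
        _ = ι' m * ι' m₁ * ι' m₂ * x := by rw [h12 m₁ m]; noncomm_ring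
        _ = ι' m * (ι' m₁ * ι' m₂ * x) := by noncomm_ring
  induction b using CliffordAlgebra.induction with
  | algebraMap r => rw [Algebra.commutes]
  | ι m => exact hι m
  | mul x y ihx ihy => rw [← mul_assoc, ihx, mul_assoc, ihy, mul_assoc]
  | add x y ihx ihy => rw [mul_add, add_mul, ihx, ihy]

def A0plus (K : Type) [Field K] : Set (Matrix (Fin 2) (Fin 2) (GrassmannE K)) :=
  {x | ∃ a ∈ E0 K, x = !![a, 0; 0, a]}

/-- Skew degree-0 part `{diag(a,-a) : a ∈ E₀}`. -/
def A0minus (K : Type) [Field K] : Set (Matrix (Fin 2) (Fin 2) (GrassmannE K)) :=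
  {x | ∃ a ∈ E0 K, x = !![a, 0; 0, -a]}

/-- Symmetric degree-1 part `{c·e₁₂ : c ∈ E₁}`. -/
def A1plus (K : Type) [Field K] : Set (Matrix (Fin 2) (Fin 2) (GrassmannE K)) :=
  {x | ∃ c ∈ E1 K, x = !![0, c; 0, 0]}

/-- in `A = (UT_{1,1}(E), *)`: (1) every symmetric degree-0 element is central in
`A`; (2) the product of any two symmetric degree-1 elements is zero; (3) any two skew degree-0
elements commute; (4) skew degree-0 elements anticommute with symmetric degree-1 elements. -/
theorem ut11_identities (K : Type) [Field K] [CharZero K] :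
    (∀ s ∈ A0plus K, ∀ x ∈ UT11E K, s * x = x * s) ∧
    (∀ u ∈ A1plus K, ∀ v ∈ A1plus K, u * v = 0) ∧
    (∀ v ∈ A0minus K, ∀ w ∈ A0minus K, v * w = w * v) ∧
    (∀ v ∈ A0minus K, ∀ u ∈ A1plus K, v * u + u * v = 0) := by

  have h0 : (0 : Matrix (Fin 2) (Fin 2) (GrassmannE K)) = !![0, 0; 0, 0] := by
    have := Matrix.eta_fin_two (0 : Matrix (Fin 2) (Fin 2) (GrassmannE K))
    simpa using this
  refine ⟨?_, ?_, ?_, ?_⟩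
  · rintro s ⟨a, ha, rfl⟩ x ⟨hx10, hx00, hx11, hx01⟩
    rw [Matrix.eta_fin_two x, hx10, Matrix.mul_fin_two, Matrix.mul_fin_two]
    simp only [mul_zero, zero_mul, add_zero, zero_add,
      even_central a ha (x 0 0), even_central a ha (x 0 1), even_central a ha (x 1 1)]
  · rintro u ⟨c, hc, rfl⟩ v ⟨d, hd, rfl⟩
    rw [Matrix.mul_fin_two, h0]
    simp only [mul_zero, zero_mul, add_zero, zero_add]
  · rintro v ⟨a, ha, rfl⟩ w ⟨b, hb, rfl⟩
    rw [Matrix.mul_fin_two, Matrix.mul_fin_two]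
    simp only [mul_zero, zero_mul, add_zero, zero_add, neg_mul, mul_neg, neg_neg,
      even_central a ha b]
  · rintro v ⟨a, ha, rfl⟩ u ⟨c, hc, rfl⟩
    rw [Matrix.mul_fin_two, Matrix.mul_fin_two]
    simp only [mul_zero, zero_mul, add_zero, zero_add, neg_mul, mul_neg, neg_zero,
      even_central a ha c]
    rw [Matrix.eta_fin_two (!![0, c * a; 0, 0] + !![0, -(c * a); 0, 0]), h0]
    simp
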